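/- Let g be of type A₃ and ι = (..., 2, 1, 2, 3, 2, 1) (so ι is not adapted). Let λ be a dominant integral weight with ⟨h₂, λ⟩ > 0. Then the linear function φ = −x₄ + x₃ − ⟨h₂, λ⟩ lies in Ξ_ι[λ] (indeed φ = Ŝ₂ Ŝ₅ Ŝ₂ Ŝ₁ x₁), and φ(0) = −⟨h₂, λ⟩ < 0; hence the pair (ι, λ) is not ample. -/
import Mathlib


/-! Non-ampleness for type `A₃` with the non-adapted sequence
`ι = (…,2,1,2,3,2,1)` (so `ι` is `1,2,3,2` repeated: `i₁=1, i₂=2, i₃=3, i₄=2, …`). -/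

/-- Affine-linear functions on `ℚ^∞`: a constant together with coefficients. -/
abbrev AffForm : Type := ℚ × (ℕ → ℚ)

/-- The Cartan matrix pairing `⟨h_i, α_j⟩` of type `A` (valid on indices `1,…,n`). -/
def CartanA (i j : ℕ) : ℤ := if i = j then 2 else if i = j + 1 ∨ j = i + 1 then -1 else 0

/-- `β_k⁽⁺⁾ = x_k + Σ_{k<j<k⁽⁺⁾} ⟨h_{i_k}, α_{i_j}⟩ x_j + x_{k⁽⁺⁾}`. -/
def betaPosA (C : ℕ → ℕ → ℤ) (ι kp : ℕ → ℕ) (k : ℕ) : AffForm :=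
  (0, fun j =>
    (if j = k then 1 else 0) + (if k < j ∧ j < kp k then (C (ι k) (ι j) : ℚ) else 0) +
      (if j = kp k then 1 else 0))

/-- `β_k⁽⁻⁾` (with constant term `−⟨h_{i_k}, λ⟩` when `k⁽⁻⁾ = 0`). -/
def betaNegA (C : ℕ → ℕ → ℤ) (ι km : ℕ → ℕ) (lam : ℕ → ℤ) (k : ℕ) : AffForm :=
  if km k = 0 then
    (-(lam (ι k) : ℚ),
      fun j => (if 1 ≤ j ∧ j < k then (C (ι k) (ι j) : ℚ) else 0) + (if j = k then 1 else 0))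
  else
    (0, fun j =>
      (if j = km k then 1 else 0) + (if km k < j ∧ j < k then (C (ι k) (ι j) : ℚ) else 0) +
        (if j = k then 1 else 0))

/-- The operator `Ŝ_k`. -/
def ShatAbs (C : ℕ → ℕ → ℤ) (ι kp km : ℕ → ℕ) (lam : ℕ → ℤ) (k : ℕ) (φ : AffForm) : AffForm :=
  if 0 < φ.2 k then φ - φ.2 k • betaPosA C ι kp k
  else φ - φ.2 k • betaNegA C ι km lam k

def IsKp (ι kp : ℕ → ℕ) : Prop :=
  ∀ k, 1 ≤ k → k < kp k ∧ ι (kp k) = ι k ∧ ∀ l, k < l → ι l = ι k → kp k ≤ l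

def IsKm (ι km : ℕ → ℕ) : Prop :=
  ∀ k, 1 ≤ k →
    (km k = 0 ∧ ∀ l, 1 ≤ l → l < k → ι l ≠ ι k) ∨
    (1 ≤ km k ∧ km k < k ∧ ι (km k) = ι k ∧ ∀ l, 1 ≤ l → l < k → ι l = ι k → l ≤ km k)

/-- The sequence `ι = (…,2,1,2,3,2,1)` of the example: `1,2,3,2` repeating. -/
def iota7 : ℕ → ℕ := fun m =>
  if m % 4 = 1 then 1 else if m % 4 = 2 then 2 else if m % 4 = 3 then 3 else 2

/-- `ι⁽ⁱ⁾`, the first position of `ι` at which `i` occurs. -/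
noncomputable def firstOcc (ι : ℕ → ℕ) (i : ℕ) : ℕ := sInf {m | 1 ≤ m ∧ ι m = i}

/-- The generator `λ⁽ⁱ⁾ = ⟨h_i,λ⟩ − Σ_{1≤j<ι⁽ⁱ⁾} ⟨h_i, α_{i_j}⟩ x_j − x_{ι⁽ⁱ⁾}`. -/
noncomputable def lamGenA (ι : ℕ → ℕ) (lam : ℕ → ℤ) (i : ℕ) : AffForm :=
  ((lam i : ℚ), fun j =>
    -((if 1 ≤ j ∧ j < firstOcc ι i then (CartanA i (ι j) : ℚ) else 0) +
      (if j = firstOcc ι i then 1 else 0)))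

/-- The coordinate functional `x_j`. -/
def xGen (j : ℕ) : AffForm := ((0 : ℚ), fun j' => if j' = j then 1 else 0)

/-- `Ξ_ι[λ]`: everything generated from the `x_j` (`j ≥ 1`) and the `λ⁽ⁱ⁾` (`i ∈ I`)
by the operators `Ŝ_k` (`k ≥ 1`), for `n = 3`. -/
noncomputable def XiSet7 (kp km : ℕ → ℕ) (lam : ℕ → ℤ) : Set AffForm :=
  {ψ | ∃ g : AffForm,
    ((∃ jj, 1 ≤ jj ∧ g = xGen jj) ∨ (∃ i, 1 ≤ i ∧ i ≤ 3 ∧ g = lamGenA iota7 lam i)) ∧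
    ∃ L : List ℕ, (∀ m ∈ L, 1 ≤ m) ∧
      ψ = L.foldr (ShatAbs CartanA iota7 kp km lam) g}

/-- The function `φ = −x₄ + x₃ − ⟨h₂,λ⟩`. -/
def phiT (lam : ℕ → ℤ) : AffForm :=
  (-(lam 2 : ℚ), fun j => (if j = 3 then (1 : ℚ) else 0) + (if j = 4 then (-1 : ℚ) else 0))

/-- For type `A₃`, `ι = (…,2,1,2,3,2,1)` and `λ` dominant integral with `⟨h₂,λ⟩ > 0`,
the function `φ = −x₄ + x₃ − ⟨h₂,λ⟩` lies in `Ξ_ι[λ]`; indeed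
`φ = Ŝ₂ Ŝ₅ Ŝ₂ Ŝ₁ x₁`.  Moreover `φ(0) = −⟨h₂,λ⟩ < 0`, hence `(ι,λ)` is not ample. -/
theorem not_ample_example (kp km : ℕ → ℕ) (lam : ℕ → ℤ)
    (hkp : IsKp iota7 kp) (hkm : IsKm iota7 km)
    (hdom : ∀ i, 0 ≤ lam i) (hlam2 : 0 < lam 2) :
    phiT lam =
      ShatAbs CartanA iota7 kp km lam 2 (ShatAbs CartanA iota7 kp km lam 5
        (ShatAbs CartanA iota7 kp km lam 2 (ShatAbs CartanA iota7 kp km lam 1 (xGen 1)))) ∧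
    phiT lam ∈ XiSet7 kp km lam ∧
    (phiT lam).1 = -(lam 2 : ℚ) ∧ (phiT lam).1 < 0 ∧
    ¬(∀ ψ ∈ XiSet7 kp km lam, 0 ≤ ψ.1) := by
  -- determine kp 1, kp 2, km 2, km 5
  obtain ⟨hk1lt, hk1eq, hk1min⟩ := hkp 1 le_rfl
  obtain ⟨hk2lt, hk2eq, hk2min⟩ := hkp 2 one_le_two
  have hkp1 : kp 1 = 5 := by
    have h5 := hk1min 5 (by norm_num) (by decide)
    interval_cases h : (kp 1) <;> simp [iota7] at hk1eq ⊢
  have hkp2 : kp 2 = 4 := by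
    have h4 := hk2min 4 (by norm_num) (by decide)
    interval_cases h : (kp 2) <;> simp [iota7] at hk2eq ⊢
  have hkm2 : km 2 = 0 := by
    rcases hkm 2 one_le_two with ⟨h, _⟩ | ⟨h1, h2, h3, _⟩
    · exact h
    · interval_cases h : (km 2) <;> simp [iota7] at h3
  have hkm5 : km 5 = 1 := by
    rcases hkm 5 (by norm_num) with ⟨h, hall⟩ | ⟨h1, h2, h3, _⟩
    · exact absurd (by decide : iota7 1 = iota7 5) (hall 1 le_rfl (by norm_num))
    · interval_cases h : (km 5) <;> simp [iota7] at h3 ⊢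
  -- step computations
  have s1 : ShatAbs CartanA iota7 kp km lam 1 (xGen 1)
      = (0, fun j => (if j = 2 then 1 else 0) + (if j = 4 then 1 else 0)
          - (if j = 5 then (1:ℚ) else 0)) := by
    rw [ShatAbs, if_pos (by norm_num [xGen])]
    ext j
    · simp [xGen, betaPosA]
    · rcases j with _|_|_|_|_|_|j <;>
        simp [xGen, betaPosA, hkp1, iota7, CartanA, Nat.add_mod]
  have s2 : ShatAbs CartanA iota7 kp km lam 2
      (0, fun j => (if j = 2 then 1 else 0) + (if j = 4 then 1 else 0)
          - (if j = 5 then (1:ℚ) else 0))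
      = (0, fun j => (if j = 3 then 1 else 0) - (if j = 5 then (1:ℚ) else 0)) := by
    rw [ShatAbs, if_pos (by norm_num)]
    ext j
    · simp [betaPosA]
    · rcases j with _|_|_|_|_|_|j <;>
        simp [betaPosA, hkp2, iota7, CartanA, Nat.add_mod]
  have s3 : ShatAbs CartanA iota7 kp km lam 5
      (0, fun j => (if j = 3 then 1 else 0) - (if j = 5 then (1:ℚ) else 0))
      = (0, fun j => (if j = 1 then 1 else 0) - (if j = 2 then 1 else 0)
          + (if j = 3 then 1 else 0) - (if j = 4 then (1:ℚ) else 0)) := by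
    rw [ShatAbs, if_neg (by norm_num)]
    rw [betaNegA, if_neg (by rw [hkm5]; norm_num)]
    ext j
    · simp
    · rcases j with _|_|_|_|_|_|j <;>
        simp [hkm5, iota7, CartanA, Nat.add_mod] <;> ring
  have s4 : ShatAbs CartanA iota7 kp km lam 2
      (0, fun j => (if j = 1 then 1 else 0) - (if j = 2 then 1 else 0)
          + (if j = 3 then 1 else 0) - (if j = 4 then (1:ℚ) else 0))
      = phiT lam := by
    rw [ShatAbs, if_neg (by norm_num)]
    rw [betaNegA, if_pos hkm2]
    ext j
    · simp [phiT, iota7]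
    · rcases j with _|_|_|_|_|_|j <;>
        simp [phiT, iota7, CartanA, Nat.add_mod] <;> ring
  have hmain : phiT lam =
      ShatAbs CartanA iota7 kp km lam 2 (ShatAbs CartanA iota7 kp km lam 5
        (ShatAbs CartanA iota7 kp km lam 2 (ShatAbs CartanA iota7 kp km lam 1 (xGen 1)))) := by
    rw [s1, s2, s3, s4]
  have hmem : phiT lam ∈ XiSet7 kp km lam := by
    refine ⟨xGen 1, Or.inl ⟨1, le_rfl, rfl⟩, [2, 5, 2, 1], ?_, ?_⟩
    · intro m hm; fin_cases hm <;> norm_num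
    · simpa using hmain
  have hneg : (phiT lam).1 < 0 := by
    have : (0:ℚ) < (lam 2 : ℚ) := by exact_mod_cast hlam2
    simp [phiT]; linarith
  exact ⟨hmain, hmem, rfl, hneg, fun h => absurd (h _ hmem) (not_le.mpr hneg)⟩
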